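/- arXiv:2201.02572 — 6 statements merged into one kernel-verified Lean document; each statement's English description precedes it below -/
import Mathlib

section
/- In a 2-crossed module, the map h ▷' l := l · {δ(l)⁻¹, h}ₚ defines a left action of the group H on the group L by automorphisms. -/
/-- A 2-crossed module `(L → H → G, ▷, {_,_}ₚ)`. -/
structure TwoCrossedModule (G H L : Type*) [Group G] [Group H] [Group L] where
  /-- the map `δ : L → H` -/
  dl : L →* H
  /-- the map `∂ : H → G` -/
  dh : H →* G
  /-- the action `▷` of `G` on `H` by automorphisms -/
  actH : G →* MulAut H
  /-- the action `▷` of `G` on `L` by automorphisms -/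
  actL : G →* MulAut L
  /-- the Peiffer lifting `{_,_}ₚ : H × H → L` -/
  pf : H → H → L
  comp_trivial : ∀ l : L, dh (dl l) = 1
  equiv_dh : ∀ (g : G) (h : H), dh (actH g h) = g * dh h * g⁻¹
  equiv_dl : ∀ (g : G) (l : L), dl (actL g l) = actH g (dl l)
  equiv_pf : ∀ (g : G) (h₁ h₂ : H), actL g (pf h₁ h₂) = pf (actH g h₁) (actH g h₂)
  ax1 : ∀ h₁ h₂ : H, dl (pf h₁ h₂) = h₁ * h₂ * h₁⁻¹ * actH (dh h₁) h₂⁻¹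
  ax2 : ∀ l₁ l₂ : L, l₁ * l₂ * l₁⁻¹ * l₂⁻¹ = pf (dl l₁) (dl l₂)
  ax3 : ∀ h₁ h₂ h₃ : H,
    pf (h₁ * h₂) h₃ = pf h₁ (h₂ * h₃ * h₂⁻¹) * actL (dh h₁) (pf h₂ h₃)
  ax4 : ∀ h₁ h₂ h₃ : H, pf h₁ (h₂ * h₃) =
    pf h₁ h₂ * pf h₁ h₃ * pf ((h₁ * h₃ * h₁⁻¹ * actH (dh h₁) h₃⁻¹)⁻¹) (actH (dh h₁) h₂)
  ax5 : ∀ (h : H) (l : L), pf (dl l) h * pf h (dl l) = l * actL (dh h) l⁻¹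

/-- The induced action `h ▷' l = l · {δ(l)⁻¹, h}ₚ` of `H` on `L`. -/
def TwoCrossedModule.ap {G H L : Type*} [Group G] [Group H] [Group L]
    (T : TwoCrossedModule G H L) (h : H) (l : L) : L :=
  l * T.pf (T.dl l)⁻¹ h

section Helpers
variable {G H L : Type*} [Group G] [Group H] [Group L] (T : TwoCrossedModule G H L)

lemma TCM.dh_dl_inv (l : L) : T.dh ((T.dl l)⁻¹) = 1 := by
  rw [map_inv, T.comp_trivial, inv_one]

lemma TCM.pf_one_left (h : H) : T.pf 1 h = 1 := by
  have := T.ax3 1 1 h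
  simp only [one_mul, mul_one, inv_one, map_one, MulAut.one_apply] at this
  exact left_eq_mul.mp this

lemma TCM.pf_one_right (h : H) : T.pf h 1 = 1 := by
  have := T.ax4 h 1 1
  simp only [one_mul, mul_one, inv_one, map_one, MulAut.one_apply, mul_inv_cancel,
    TCM.pf_one_left] at this
  exact left_eq_mul.mp this

lemma TCM.dl_pf_inv (l : L) (h : H) :
    T.dl (T.pf (T.dl l)⁻¹ h) = (T.dl l)⁻¹ * h * T.dl l * h⁻¹ := by
  rw [T.ax1, TCM.dh_dl_inv, map_one, MulAut.one_apply, inv_inv]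

lemma TCM.conj (l m : L) : T.pf (T.dl l)⁻¹ (T.dl m) = l⁻¹ * m * l * m⁻¹ := by
  rw [← map_inv, ← T.ax2 l⁻¹ m, inv_inv]

lemma TCM.ap_one (l : L) : T.ap 1 l = l := by
  rw [TwoCrossedModule.ap, TCM.pf_one_right, mul_one]

lemma TCM.ap_mul (h₁ h₂ : H) (l : L) : T.ap (h₁ * h₂) l = T.ap h₁ (T.ap h₂ l) := by
  set m₁ := T.pf (T.dl l)⁻¹ h₁ with hm₁
  set m₂ := T.pf (T.dl l)⁻¹ h₂ with hm₂
  set k := T.pf (T.dl m₂)⁻¹ h₁ with hk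
  have hA : T.pf (T.dl l)⁻¹ (h₁ * h₂) = m₁ * m₂ * k := by
    have := T.ax4 (T.dl l)⁻¹ h₁ h₂
    rw [TCM.dh_dl_inv, map_one, MulAut.one_apply, MulAut.one_apply, inv_inv] at this
    rw [this, ← TCM.dl_pf_inv, ← hm₂, ← hk, ← hm₁]
  have hB : T.pf (T.dl (l * m₂))⁻¹ h₁
      = T.pf (T.dl m₂)⁻¹ ((T.dl l)⁻¹ * h₁ * T.dl l) * m₁ := by
    rw [map_mul, mul_inv_rev, T.ax3, TCM.dh_dl_inv, map_one, MulAut.one_apply, inv_inv,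
      ← hm₁]
  have hC : T.pf (T.dl m₂)⁻¹ ((T.dl l)⁻¹ * h₁ * T.dl l)
      = (m₂⁻¹ * m₁ * m₂ * m₁⁻¹) * k * (k⁻¹ * m₁ * k * m₁⁻¹) := by
    have harg : (T.dl l)⁻¹ * h₁ * T.dl l = T.dl m₁ * h₁ := by
      rw [hm₁, TCM.dl_pf_inv]; group
    rw [harg]
    have := T.ax4 (T.dl m₂)⁻¹ (T.dl m₁) h₁
    rw [TCM.dh_dl_inv, map_one, MulAut.one_apply, MulAut.one_apply, inv_inv,
      ← TCM.dl_pf_inv, ← hk, TCM.conj, TCM.conj] at this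
    exact this
  show l * T.pf (T.dl l)⁻¹ (h₁ * h₂) = (l * m₂) * T.pf (T.dl (l * m₂))⁻¹ h₁
  rw [hA, hB, hC]; group

lemma TCM.ap_mul_right (h : H) (l₁ l₂ : L) : T.ap h (l₁ * l₂) = T.ap h l₁ * T.ap h l₂ := by
  set m₁ := T.pf (T.dl l₁)⁻¹ h with hm₁
  set m₂ := T.pf (T.dl l₂)⁻¹ h with hm₂
  show l₁ * l₂ * T.pf (T.dl (l₁ * l₂))⁻¹ h = (l₁ * m₁) * (l₂ * m₂)
  have hB : T.pf (T.dl (l₁ * l₂))⁻¹ h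
      = T.pf (T.dl l₂)⁻¹ ((T.dl l₁)⁻¹ * h * T.dl l₁) * m₁ := by
    rw [map_mul, mul_inv_rev, T.ax3, TCM.dh_dl_inv, map_one, MulAut.one_apply, inv_inv,
      ← hm₁]
  have hC : T.pf (T.dl l₂)⁻¹ ((T.dl l₁)⁻¹ * h * T.dl l₁)
      = T.pf (T.dl l₂)⁻¹ (T.dl m₁ * h) := by
    rw [hm₁, TCM.dl_pf_inv]; group
  have hD : T.pf (T.dl l₂)⁻¹ (T.dl m₁ * h)
      = (l₂⁻¹ * m₁ * l₂ * m₁⁻¹) * m₂ * (m₂⁻¹ * m₁ * m₂ * m₁⁻¹) := by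
    have := T.ax4 (T.dl l₂)⁻¹ (T.dl m₁) h
    rw [TCM.dh_dl_inv, map_one, MulAut.one_apply, MulAut.one_apply, inv_inv,
      ← TCM.dl_pf_inv, ← hm₂, TCM.conj, TCM.conj] at this
    exact this
  rw [hB, hC, hD]; group

end Helpers

theorem ap_is_action {G H L : Type*} [Group G] [Group H] [Group L]
    (T : TwoCrossedModule G H L) :
    (∀ l : L, T.ap 1 l = l) ∧
    (∀ (h₁ h₂ : H) (l : L), T.ap (h₁ * h₂) l = T.ap h₁ (T.ap h₂ l)) ∧
    (∀ (h : H) (l₁ l₂ : L), T.ap h (l₁ * l₂) = T.ap h l₁ * T.ap h l₂) := by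
  exact ⟨TCM.ap_one T, TCM.ap_mul T, TCM.ap_mul_right T⟩
end

section
/- In a 2-crossed module, the structure (L →δ H, ▷') with the action h ▷' l = l·{δ(l)⁻¹, h}ₚ is a crossed module; in particular the Peiffer identity δ(l₁) ▷' l₂ = l₁ l₂ l₁⁻¹ holds for all l₁, l₂ ∈ L. -/
theorem ap_crossed_module {G H L : Type*} [Group G] [Group H] [Group L]
    (T : TwoCrossedModule G H L) :
    (∀ (h : H) (l : L), T.dl (T.ap h l) = h * T.dl l * h⁻¹) ∧
    (∀ l₁ l₂ : L, T.ap (T.dl l₁) l₂ = l₁ * l₂ * l₁⁻¹) := by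
  constructor
  · intro h l
    have h1 : T.dh (T.dl l)⁻¹ = 1 := by rw [map_inv, T.comp_trivial, inv_one]
    rw [TwoCrossedModule.ap, map_mul, T.ax1, h1, map_one]
    simp [mul_assoc]
  · intro l₁ l₂
    have := T.ax2 l₂⁻¹ l₁
    rw [map_inv] at this
    rw [TwoCrossedModule.ap, ← this]
    group
end

section
/- In a 2-crossed module, for all h₁, h₂, h₃ ∈ H: {h₁h₂, h₃}ₚ = (h₁ ▷' {h₂,h₃}ₚ) · {h₁, ∂(h₂) ▷ h₃}ₚ, where h ▷' l = l·{δ(l)⁻¹,h}ₚ. -/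
namespace TwoCrossedModule
variable {G H L : Type*} [Group G] [Group H] [Group L] (T : TwoCrossedModule G H L)

lemma pf_one_left (h : H) : T.pf 1 h = 1 := by
  have h3 := T.ax3 1 1 h
  simp only [one_mul, mul_one, inv_one, map_one, MulAut.one_apply] at h3
  exact left_eq_mul.mp h3

lemma pf_dl_self (l : L) : T.pf (T.dl l) (T.dl l) = 1 := by
  rw [← T.ax2 l l]; group

lemma pf_dl_inv_self (l : L) : T.pf (T.dl l) (T.dl l)⁻¹ = 1 := by
  have e := T.ax2 l l⁻¹
  rw [map_inv] at e
  rw [← e]; group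

lemma pf_dl_mul_self (l : L) (h : H) : T.pf (T.dl l) (h * T.dl l) = T.pf (T.dl l) h := by
  have h4 := T.ax4 (T.dl l) h (T.dl l)
  rw [T.comp_trivial, map_one, MulAut.one_apply, MulAut.one_apply] at h4
  have e : (T.dl l * T.dl l * (T.dl l)⁻¹ * (T.dl l)⁻¹)⁻¹ = (1 : H) := by group
  rw [e, T.pf_one_left, T.pf_dl_self, mul_one, mul_one] at h4
  exact h4

lemma pf_dl_conj (l : L) (h : H) :
    T.pf (T.dl l) ((T.dl l)⁻¹ * h * T.dl l) = l⁻¹ * T.pf (T.dl l) h * l := by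
  have h4 := T.ax4 (T.dl l) (T.dl l)⁻¹ (h * T.dl l)
  rw [T.comp_trivial, map_one, MulAut.one_apply, MulAut.one_apply] at h4
  have e0 := T.ax1 (T.dl l) (h * T.dl l)
  rw [T.comp_trivial, map_one, MulAut.one_apply] at e0
  have e2 := T.ax2 (T.pf (T.dl l) (h * T.dl l))⁻¹ l⁻¹
  rw [map_inv, map_inv, e0] at e2
  rw [← e2, T.pf_dl_inv_self, one_mul, T.pf_dl_mul_self] at h4
  rw [show (T.dl l)⁻¹ * h * T.dl l = (T.dl l)⁻¹ * (h * T.dl l) by group, h4]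
  group

lemma pf_dl_inv (l : L) (h : H) :
    T.pf (T.dl l)⁻¹ h = l⁻¹ * (T.pf (T.dl l) h)⁻¹ * l := by
  have h3 := T.ax3 (T.dl l) (T.dl l)⁻¹ h
  rw [mul_inv_cancel, T.pf_one_left, T.comp_trivial, map_one, MulAut.one_apply,
    inv_inv, T.pf_dl_conj] at h3
  rw [← inv_eq_of_mul_eq_one_right h3.symm]
  group

end TwoCrossedModule
theorem pf_mul_left {G H L : Type*} [Group G] [Group H] [Group L]
    (T : TwoCrossedModule G H L) (h₁ h₂ h₃ : H) :
    T.pf (h₁ * h₂) h₃ = T.ap h₁ (T.pf h₂ h₃) * T.pf h₁ (T.actH (T.dh h₂) h₃) := by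
  have key : h₂ * h₃ * h₂⁻¹ = T.dl (T.pf h₂ h₃) * T.actH (T.dh h₂) h₃ := by
    rw [T.ax1, map_inv]; group
  have h3 := T.ax3 h₁ h₂ h₃
  rw [key] at h3
  have h4 := T.ax4 h₁ (T.dl (T.pf h₂ h₃)) (T.actH (T.dh h₂) h₃)
  have e0 := T.ax1 h₁ (T.actH (T.dh h₂) h₃)
  have e2 := T.ax2 (T.pf h₁ (T.actH (T.dh h₂) h₃))⁻¹ (T.actL (T.dh h₁) (T.pf h₂ h₃))
  rw [map_inv, e0, T.equiv_dl] at e2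
  rw [← e2] at h4
  have h5 := T.ax5 h₁ (T.pf h₂ h₃)
  rw [map_inv] at h5
  have q0 : T.pf h₁ (T.dl (T.pf h₂ h₃)) = (T.pf (T.dl (T.pf h₂ h₃)) h₁)⁻¹ *
      (T.pf h₂ h₃ * (T.actL (T.dh h₁) (T.pf h₂ h₃))⁻¹) := by
    rw [← h5]; group
  rw [q0] at h4
  simp only [TwoCrossedModule.ap]
  rw [h3, h4, T.pf_dl_inv]
  group
end

section
/- In a 2-crossed module, for all h₁, h₂ ∈ H: {h₁,h₂}ₚ⁻¹ = (h₁h₂h₁⁻¹) ▷' {h₁, h₂⁻¹}ₚ, where h ▷' l = l·{δ(l)⁻¹,h}ₚ. -/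
namespace TwoCrossedModule

variable {G H L : Type*} [Group G] [Group H] [Group L] (T : TwoCrossedModule G H L)

lemma pf_one_right (h : H) : T.pf h 1 = 1 := by
  have h4 := T.ax4 h 1 1
  simp only [mul_one, inv_one, map_one, mul_inv_cancel, pf_one_left] at h4
  exact left_eq_mul.mp h4

lemma actH_dh_dl (l : L) (h : H) : T.actH (T.dh (T.dl l)) h = h := by
  rw [T.comp_trivial, map_one, MulAut.one_apply]

lemma pf_dl_dl (k m : L) : T.pf (T.dl k) (T.dl m) = k * m * k⁻¹ * m⁻¹ :=
  (T.ax2 k m).symm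

lemma dl_pf_dl (k : L) (h : H) :
    T.dl (T.pf (T.dl k) h) = T.dl k * h * (T.dl k)⁻¹ * h⁻¹ := by
  rw [T.ax1, T.actH_dh_dl]

lemma pf_dl_mul (k : L) (h₁ h₂ : H) :
    T.pf (T.dl k) (h₁ * h₂) =
      T.pf (T.dl k) h₁ * T.pf (T.dl k) h₂ * T.pf (T.dl (T.pf (T.dl k) h₂))⁻¹ h₁ := by
  rw [T.ax4, T.actH_dh_dl, T.actH_dh_dl, dl_pf_dl]

lemma conj_eq_dl_pf_mul_actH (h₁ h₂ : H) :
    h₁ * h₂ * h₁⁻¹ = T.dl (T.pf h₁ h₂) * T.actH (T.dh h₁) h₂ := by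
  rw [T.ax1, map_inv]
  group

lemma ap_dl_mul (m l : L) (h : H) : T.ap (T.dl m * h) l = m * T.ap h l * m⁻¹ := by
  rw [ap, ap, ← map_inv, pf_dl_mul, ← map_inv, pf_dl_dl, pf_dl_dl]
  group

lemma ap_actH_pf_inv (h₁ h₂ : H) :
    T.ap (T.actH (T.dh h₁) h₂) (T.pf h₁ h₂⁻¹) = (T.pf h₁ h₂)⁻¹ := by
  have h4 := T.ax4 h₁ h₂ h₂⁻¹
  rw [mul_inv_cancel, pf_one_right, ← T.ax1, mul_assoc] at h4
  exact eq_inv_of_mul_eq_one_right h4.symm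

end TwoCrossedModule

theorem pf_inv_eq_ap_conj {G H L : Type*} [Group G] [Group H] [Group L]
    (T : TwoCrossedModule G H L) (h₁ h₂ : H) :
    (T.pf h₁ h₂)⁻¹ = T.ap (h₁ * h₂ * h₁⁻¹) (T.pf h₁ h₂⁻¹) := by
  rw [T.conj_eq_dl_pf_mul_actH, T.ap_dl_mul, T.ap_actH_pf_inv]
  group
end

section
/- In a 2-crossed module, let the vertical composition of 3-morphisms be (g₂,h₂,l₂) #₂ (g₁,h₁,l₁) = (g₁, h₂h₁, l₂·(h₂ ▷' l₁)) and the upward composition be (g,h₂,l₂) #₃ (g,h₁,l₁) = (g,h₁,l₂l₁). Then, whenever h₁' = δ(l₁)h₁ and h₂' = δ(l₂)h₂, the interchange law ((g₂,h₂',l₂') #₃ (g₂,h₂,l₂)) #₂ ((g₁,h₁',l₁') #₃ (g₁,h₁,l₁)) = ((g₂,h₂',l₂') #₂ (g₁,h₁',l₁')) #₃ ((g₂,h₂,l₂) #₂ (g₁,h₁,l₁)) holds; equivalently, the third components agree, i.e. l₂'·(δ(l₂)h₂ ▷' l₁')·l₂·(h₂ ▷' l₁) = l₂'·l₂·(h₂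 ▷' (l₁'·l₁)) in L. -/
namespace TwoCrossedModule

variable {G H L : Type*} [Group G] [Group H] [Group L] (T : TwoCrossedModule G H L)

lemma dh_dl_inv (l : L) : T.dh (T.dl l)⁻¹ = 1 := by
  rw [map_inv, T.comp_trivial, inv_one]

lemma actH_dh_dl_inv (l : L) (k : H) : T.actH (T.dh (T.dl l)⁻¹) k = k := by
  rw [dh_dl_inv, map_one]; rfl

lemma actL_dh_dl_inv (l : L) (x : L) : T.actL (T.dh (T.dl l)⁻¹) x = x := by
  rw [dh_dl_inv, map_one]; rfl

lemma dl_pf_inv (l : L) (h : H) :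
    T.dl (T.pf (T.dl l)⁻¹ h) = (T.dl l)⁻¹ * h * T.dl l * h⁻¹ := by
  rw [T.ax1, actH_dh_dl_inv, inv_inv]

/-- `ax2` restated. -/
lemma pf_dl (a b : L) : T.pf (T.dl a) (T.dl b) = a * b * a⁻¹ * b⁻¹ :=
  (T.ax2 a b).symm

/-- Multiplicativity of the induced action, in the form needed below:
`(h ▷' l₁') · l₁ · {δ(l₁)⁻¹, h}ₚ`-style identity. -/
lemma key (l₁ l₁' : L) (h : H) :
    T.pf (T.dl l₁')⁻¹ h * l₁ * T.pf (T.dl l₁)⁻¹ h =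
      l₁ * T.pf ((T.dl l₁)⁻¹ * (T.dl l₁')⁻¹) h := by
  have h1 : T.pf ((T.dl l₁)⁻¹ * (T.dl l₁')⁻¹) h
      = T.pf (T.dl l₁)⁻¹ ((T.dl l₁')⁻¹ * h * ((T.dl l₁')⁻¹)⁻¹) *
        T.pf (T.dl l₁')⁻¹ h := by
    rw [T.ax3, actL_dh_dl_inv]
  have hc : (T.dl l₁')⁻¹ * h * ((T.dl l₁')⁻¹)⁻¹
      = T.dl (T.pf (T.dl l₁')⁻¹ h) * h := by
    rw [dl_pf_inv]; group
  have h2 : T.pf (T.dl l₁)⁻¹ (T.dl (T.pf (T.dl l₁')⁻¹ h) * h)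
      = T.pf (T.dl l₁)⁻¹ (T.dl (T.pf (T.dl l₁')⁻¹ h)) * T.pf (T.dl l₁)⁻¹ h *
        T.pf (((T.dl l₁)⁻¹ * h * ((T.dl l₁)⁻¹)⁻¹ * h⁻¹)⁻¹)
          (T.dl (T.pf (T.dl l₁')⁻¹ h)) := by
    rw [T.ax4, actH_dh_dl_inv, actH_dh_dl_inv]
  have h3 : ((T.dl l₁)⁻¹ * h * ((T.dl l₁)⁻¹)⁻¹ * h⁻¹)⁻¹
      = T.dl (T.pf (T.dl l₁)⁻¹ h)⁻¹ := by
    rw [map_inv, dl_pf_inv, inv_inv]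
  have h4 : T.pf (T.dl (T.pf (T.dl l₁)⁻¹ h)⁻¹) (T.dl (T.pf (T.dl l₁')⁻¹ h))
      = (T.pf (T.dl l₁)⁻¹ h)⁻¹ * T.pf (T.dl l₁')⁻¹ h *
        ((T.pf (T.dl l₁)⁻¹ h)⁻¹)⁻¹ * (T.pf (T.dl l₁')⁻¹ h)⁻¹ :=
    (T.ax2 (T.pf (T.dl l₁)⁻¹ h)⁻¹ (T.pf (T.dl l₁')⁻¹ h)).symm
  have h5 : T.pf (T.dl l₁)⁻¹ (T.dl (T.pf (T.dl l₁')⁻¹ h))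
      = l₁⁻¹ * T.pf (T.dl l₁')⁻¹ h * (l₁⁻¹)⁻¹ * (T.pf (T.dl l₁')⁻¹ h)⁻¹ := by
    rw [← T.pf_dl, map_inv]
  rw [h1, hc, h2, h3, h4, h5]
  group

end TwoCrossedModule

theorem interchange_law {G H L : Type*} [Group G] [Group H] [Group L]
    (T : TwoCrossedModule G H L) (l₁ l₁' l₂ l₂' : L) (h₂ : H) :
    l₂' * T.ap (T.dl l₂ * h₂) l₁' * l₂ * T.ap h₂ l₁ =
      l₂' * l₂ * T.ap h₂ (l₁' * l₁) := by
  unfold TwoCrossedModule.ap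
  have e1 : T.pf (T.dl l₁')⁻¹ (T.dl l₂ * h₂)
      = T.pf (T.dl l₁')⁻¹ (T.dl l₂) * T.pf (T.dl l₁')⁻¹ h₂ *
        T.pf (((T.dl l₁')⁻¹ * h₂ * ((T.dl l₁')⁻¹)⁻¹ * h₂⁻¹)⁻¹) (T.dl l₂) := by
    rw [T.ax4, T.actH_dh_dl_inv, T.actH_dh_dl_inv]
  have e2 : T.pf (T.dl l₁')⁻¹ (T.dl l₂)
      = l₁'⁻¹ * l₂ * (l₁'⁻¹)⁻¹ * l₂⁻¹ := by
    rw [← T.pf_dl, map_inv]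
  have e3 : ((T.dl l₁')⁻¹ * h₂ * ((T.dl l₁')⁻¹)⁻¹ * h₂⁻¹)⁻¹
      = T.dl (T.pf (T.dl l₁')⁻¹ h₂)⁻¹ := by
    rw [map_inv, T.dl_pf_inv, inv_inv]
  have e4 : T.pf (T.dl (T.pf (T.dl l₁')⁻¹ h₂)⁻¹) (T.dl l₂)
      = (T.pf (T.dl l₁')⁻¹ h₂)⁻¹ * l₂ * ((T.pf (T.dl l₁')⁻¹ h₂)⁻¹)⁻¹ * l₂⁻¹ := by
    rw [← T.pf_dl, map_inv]
  have e5 : (T.dl (l₁' * l₁))⁻¹ = (T.dl l₁)⁻¹ * (T.dl l₁')⁻¹ := by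
    rw [map_mul, mul_inv_rev]
  have e6 : T.pf ((T.dl l₁)⁻¹ * (T.dl l₁')⁻¹) h₂
      = l₁⁻¹ * (T.pf (T.dl l₁')⁻¹ h₂ * l₁ * T.pf (T.dl l₁)⁻¹ h₂) := by
    rw [T.key]; group
  rw [e1, e2, e3, e4, e5, e6]
  group
end

section
/- Let (L →δ H →∂ G, ▷, {_,_}ₚ) be a 2-crossed module and suppose group elements g_{jk} ∈ G (for j<k in {1,...,5}), h_{jkℓ} ∈ H, l_{jkℓm} ∈ L are assigned to the edges, triangles, and tetrahedra of a 4-simplex so that: (a) ∂(h_{jkℓ})·g_{kℓ}·g_{jk} = g_{jℓ} for every triangle; (b) h_{jkm}·h_{kℓm} = δ(l_{jkℓm})·h_{jℓm}·(g_{ℓm} ▷ h_{jkℓ}) for every tetrahedron except (1,2,3,4); then the element l_{1234} determined by the closure (higher flatness) condition l_{1345}⁻¹ · h_{135} ▷' {h_{345}, (g_{45}g_{34}) ▷ h_{123}}ₚ · l_{1235}⁻¹ · (h_{125} ▷' l_{2345}) · l_{1245} · h_{145} ▷' (g_{45} ▷ l_{1234}) = e uniquely exists, and with this l_{1234} condition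 (b) also holds for tetrahedron (1,2,3,4). -/
namespace TwoCrossedModule
variable {G H L : Type*} [Group G] [Group H] [Group L] (T : TwoCrossedModule G H L)

theorem dl_ap (h : H) (l : L) : T.dl (T.ap h l) = h * T.dl l * h⁻¹ := by
  unfold TwoCrossedModule.ap
  rw [map_mul, T.ax1]
  simp only [map_inv, T.comp_trivial, inv_one, map_one, MulAut.one_apply]
  group

theorem ap_pre (h : H) (m : L) :
    T.ap h (m * (T.pf (h⁻¹ * (T.dl m)⁻¹ * h) h)⁻¹) = m := by
  set a := h⁻¹ * (T.dl m)⁻¹ * h with ha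
  have hda : T.dh a = 1 := by
    simp only [ha, map_mul, map_inv, T.comp_trivial, inv_one]
    group
  have h1 : T.dl (m * (T.pf a h)⁻¹) = a⁻¹ := by
    rw [map_mul, map_inv, T.ax1, hda, map_one, MulAut.one_apply, ha]
    group
  unfold TwoCrossedModule.ap
  rw [h1, inv_inv, mul_assoc, inv_mul_cancel, mul_one]

theorem ap_inj (h : H) {l l' : L} (e : T.ap h l = T.ap h l') : l = l' := by
  have hdl : T.dl l = T.dl l' := by
    have := congrArg T.dl e
    rw [T.dl_ap, T.dl_ap] at this
    exact mul_left_cancel (mul_right_cancel this)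
  unfold TwoCrossedModule.ap at e
  rw [hdl] at e
  exact mul_right_cancel e

theorem actL_actL_inv (g : G) (x : L) : T.actL g (T.actL g⁻¹ x) = x := by
  rw [← MulAut.mul_apply, ← map_mul, mul_inv_cancel, map_one, MulAut.one_apply]

end TwoCrossedModule

/-- Higher flatness on the boundary of a 4-simplex determines `l₁₂₃₄` uniquely, and
the so-determined `l₁₂₃₄` satisfies the tetrahedron condition for `(1,2,3,4)`. -/
theorem flatness_determines_l1234 {G H L : Type*} [Group G] [Group H] [Group L]
    (T : TwoCrossedModule G H L)
    (g12 g13 g14 g15 g23 g24 g25 g34 g35 g45 : G)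
    (h123 h124 h125 h134 h135 h145 h234 h235 h245 h345 : H)
    (l1235 l1245 l1345 l2345 : L)
    -- (a) triangle conditions
    (t123 : T.dh h123 * g23 * g12 = g13)
    (t124 : T.dh h124 * g24 * g12 = g14)
    (t125 : T.dh h125 * g25 * g12 = g15)
    (t134 : T.dh h134 * g34 * g13 = g14)
    (t135 : T.dh h135 * g35 * g13 = g15)
    (t145 : T.dh h145 * g45 * g14 = g15)
    (t234 : T.dh h234 * g34 * g23 = g24)
    (t235 : T.dh h235 * g35 * g23 = g25)
    (t245 : T.dh h245 * g45 * g24 = g25)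
    (t345 : T.dh h345 * g45 * g34 = g35)
    -- (b) tetrahedron conditions for all tetrahedra except (1,2,3,4)
    (q1235 : h125 * h235 = T.dl l1235 * h135 * T.actH g35 h123)
    (q1245 : h125 * h245 = T.dl l1245 * h145 * T.actH g45 h124)
    (q1345 : h135 * h345 = T.dl l1345 * h145 * T.actH g45 h134)
    (q2345 : h235 * h345 = T.dl l2345 * h245 * T.actH g45 h234) :
    (∃! l1234 : L,
      l1345⁻¹ * T.ap h135 (T.pf h345 (T.actH (g45 * g34) h123)) * l1235⁻¹ *
        T.ap h125 l2345 * l1245 * T.ap h145 (T.actL g45 l1234) = 1) ∧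
    (∀ l1234 : L,
      l1345⁻¹ * T.ap h135 (T.pf h345 (T.actH (g45 * g34) h123)) * l1235⁻¹ *
        T.ap h125 l2345 * l1245 * T.ap h145 (T.actL g45 l1234) = 1 →
      h124 * h234 = T.dl l1234 * h134 * T.actH g34 h123) := by
  set C := l1345⁻¹ * T.ap h135 (T.pf h345 (T.actH (g45 * g34) h123)) * l1235⁻¹ *
        T.ap h125 l2345 * l1245 with hC
  have hCmul : ∀ l : L, (l1345⁻¹ * T.ap h135 (T.pf h345 (T.actH (g45 * g34) h123)) * l1235⁻¹ *
        T.ap h125 l2345 * l1245 * T.ap h145 (T.actL g45 l) = 1) ↔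
        (C * T.ap h145 (T.actL g45 l) = 1) := by intro l; rw [hC]
  set l0 : L := T.actL g45⁻¹ (C⁻¹ * (T.pf (h145⁻¹ * (T.dl C⁻¹)⁻¹ * h145) h145)⁻¹) with hl0
  have hsat : ∀ l : L, l = l0 → C * T.ap h145 (T.actL g45 l) = 1 := by
    intro l hl
    rw [hl, hl0, T.actL_actL_inv, T.ap_pre, mul_inv_cancel]
  have huniq : ∀ l : L, C * T.ap h145 (T.actL g45 l) = 1 → l = l0 := by
    intro l hl
    have h0 := hsat l0 rfl
    have : T.ap h145 (T.actL g45 l) = T.ap h145 (T.actL g45 l0) := by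
      rw [eq_inv_of_mul_eq_one_right hl, eq_inv_of_mul_eq_one_right h0]
    exact (T.actL g45).injective (T.ap_inj h145 this)
  constructor
  · exact ⟨l0, hsat l0 rfl, huniq⟩
  · intro l1234 hflat
    rw [hCmul] at hflat
    -- express dl of the l's
    have e1345 : T.dl l1345 = h135 * h345 * (T.actH g45 h134)⁻¹ * h145⁻¹ := by
      rw [q1345]; group
    have e1235 : T.dl l1235 = h125 * h235 * (T.actH g35 h123)⁻¹ * h135⁻¹ := by
      rw [q1235]; group
    have e2345 : T.dl l2345 = h235 * h345 * (T.actH g45 h234)⁻¹ * h245⁻¹ := by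
      rw [q2345]; group
    have e1245 : T.dl l1245 = h125 * h245 * (T.actH g45 h124)⁻¹ * h145⁻¹ := by
      rw [q1245]; group
    have hg : T.dh h345 * (g45 * g34) = g35 := by rw [← t345]; group
    have hact : T.actH (T.dh h345) (T.actH g45 (T.actH g34 h123)) = T.actH g35 h123 := by
      simp only [← MulAut.mul_apply, ← map_mul]
      rw [hg]
    have hd := congrArg T.dl hflat
    rw [hC] at hd
    simp only [map_mul, map_inv, T.dl_ap, T.ax1, T.equiv_dl, map_one, MulAut.mul_apply] at hd
    rw [hact] at hd
    rw [e1345, e1235, e2345, e1245] at hd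
    have hW : h145⁻¹ *
        ((h135 * h345 * ((T.actH g45) h134)⁻¹ * h145⁻¹)⁻¹ *
              (h135 * (h345 * (T.actH g45) ((T.actH g34) h123) * h345⁻¹ * ((T.actH g35) h123)⁻¹) * h135⁻¹) *
            (h125 * h235 * ((T.actH g35) h123)⁻¹ * h135⁻¹)⁻¹ *
          (h125 * (h235 * h345 * ((T.actH g45) h234)⁻¹ * h245⁻¹) * h125⁻¹) *
        (h125 * h245 * ((T.actH g45) h124)⁻¹ * h145⁻¹) *
      (h145 * (T.actH g45) (T.dl l1234) * h145⁻¹)) * h145 =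
        T.actH g45 h134 * T.actH g45 (T.actH g34 h123) * (T.actH g45 h234)⁻¹ *
          (T.actH g45 h124)⁻¹ * T.actH g45 (T.dl l1234) := by
      group
    rw [hd] at hW
    have h6 : T.actH g45 h134 * T.actH g45 (T.actH g34 h123) * (T.actH g45 h234)⁻¹ *
        (T.actH g45 h124)⁻¹ * T.actH g45 (T.dl l1234) = 1 := by
      rw [← hW]; group
    apply (T.actH g45).injective
    simp only [map_mul]
    calc T.actH g45 h124 * T.actH g45 h234
        = T.actH g45 (T.dl l1234) *
            (T.actH g45 h134 * T.actH g45 (T.actH g34 h123) * (T.actH g45 h234)⁻¹ *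
              (T.actH g45 h124)⁻¹ * T.actH g45 (T.dl l1234))⁻¹ *
            T.actH g45 h134 * T.actH g45 (T.actH g34 h123) := by group
      _ = T.actH g45 (T.dl l1234) * (1 : H)⁻¹ * T.actH g45 h134 * T.actH g45 (T.actH g34 h123) := by
            rw [h6]
      _ = T.actH g45 (T.dl l1234) * T.actH g45 h134 * T.actH g45 (T.actH g34 h123) := by group
end
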